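/- arXiv:1408.3029 — 5 statements merged into one kernel-verified Lean document; each statement's English description precedes it below -/
import Mathlib

section
/- For any triangle with side lengths a, b, c and semiperimeter s, the strict inequality √(a²+b²) + √(b²+c²) + √(c²+a²) < (2+√2)·s holds. -/
lemma key_sqrt (x y : ℝ) (hx : 0 < x) (hy : 0 < y) :
    Real.sqrt (x ^ 2 + y ^ 2) ≤ x + y - (2 - Real.sqrt 2) * min x y := by
  have h2 : Real.sqrt 2 ^ 2 = 2 := Real.sq_sqrt (by norm_num)
  have h1 : (1:ℝ) ≤ Real.sqrt 2 := by
    nlinarith [Real.sqrt_nonneg 2]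
  have h2' : Real.sqrt 2 ≤ 2 := by nlinarith [Real.sqrt_nonneg 2]
  rcases le_total x y with h | h
  · rw [min_eq_left h]
    have hrhs : 0 ≤ x + y - (2 - Real.sqrt 2) * x := by nlinarith
    rw [show x + y - (2 - Real.sqrt 2) * x = y + (Real.sqrt 2 - 1) * x by ring] at *
    rw [← Real.sqrt_sq hrhs]
    apply Real.sqrt_le_sqrt
    nlinarith [mul_nonneg (mul_nonneg (sub_nonneg.2 h) hx.le) (show (0:ℝ) ≤ Real.sqrt 2 - 1 by linarith)]
  · rw [min_eq_right h]
    have hrhs : 0 ≤ x + (Real.sqrt 2 - 1) * y := by nlinarith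
    rw [show x + y - (2 - Real.sqrt 2) * y = x + (Real.sqrt 2 - 1) * y by ring]
    rw [← Real.sqrt_sq hrhs]
    apply Real.sqrt_le_sqrt
    nlinarith [mul_nonneg (mul_nonneg (sub_nonneg.2 h) hy.le) (show (0:ℝ) ≤ Real.sqrt 2 - 1 by nlinarith)]

theorem stmt_1 (a b c s : ℝ) (ha : 0 < a) (hb : 0 < b) (hc : 0 < c)
    (hab : a + b > c) (hbc : b + c > a) (hca : c + a > b)
    (hs : s = (a + b + c) / 2) :
    Real.sqrt (a ^ 2 + b ^ 2) + Real.sqrt (b ^ 2 + c ^ 2) + Real.sqrt (c ^ 2 + a ^ 2) <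
      (2 + Real.sqrt 2) * s := by
  have h2 : Real.sqrt 2 ^ 2 = 2 := Real.sq_sqrt (by norm_num)
  have h2' : Real.sqrt 2 ≤ 2 := by nlinarith [Real.sqrt_nonneg 2]
  have k1 := key_sqrt a b ha hb
  have k2 := key_sqrt b c hb hc
  have k3 := key_sqrt c a hc ha
  have hM : min a b + min b c + min c a > s := by
    rcases le_total a b with h1 | h1 <;> rcases le_total b c with hh2 | hh2 <;>
      rcases le_total c a with h3 | h3 <;>
      simp only [min_eq_left, min_eq_right, min_def, if_pos, if_neg, h1, hh2, h3] <;>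
      linarith
  have hpos : (0:ℝ) < 2 - Real.sqrt 2 := by nlinarith [Real.sqrt_nonneg 2]
  have := mul_lt_mul_of_pos_left hM hpos
  linarith
end

section
/- For the right triangle with sides a = 3, b = 1, c = √10, the inequality √[3]{a³+b³} + √[3]{b³+c³} + √[3]{c³+a³} < (2+∛2)·s − 3√3·(2−∛2)·r fails; that is, the reversed (strict) inequality √[3]{a³+b³} + √[3]{b³+c³} + √[3]{c³+a³} > (2+∛2)·s − 3√3·(2−∛2)·r holds. -/
lemma cbrt_lb (q t : ℝ) (hq : 0 ≤ q) (h : q ^ 3 ≤ t) : q ≤ t ^ ((1 : ℝ) / 3) := by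
  have hq3 : q = (q ^ 3 : ℝ) ^ ((1 : ℝ) / 3) := by
    rw [← Real.rpow_natCast q 3, ← Real.rpow_mul hq]
    norm_num
  rw [hq3]
  exact Real.rpow_le_rpow (by positivity) h (by norm_num)

lemma cbrt_ub (q t : ℝ) (hq : 0 ≤ q) (ht : 0 ≤ t) (h : t ≤ q ^ 3) : t ^ ((1 : ℝ) / 3) ≤ q := by
  have hq3 : q = (q ^ 3 : ℝ) ^ ((1 : ℝ) / 3) := by
    rw [← Real.rpow_natCast q 3, ← Real.rpow_mul hq]
    norm_num
  rw [hq3]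
  exact Real.rpow_le_rpow ht h (by norm_num)

set_option maxHeartbeats 1000000 in
theorem stmt_3 (a b c s r : ℝ) (ha : a = 3) (hb : b = 1) (hc : c = Real.sqrt 10)
    (hs : s = (4 + Real.sqrt 10) / 2) (hr : r = 3 / (4 + Real.sqrt 10)) :
    (a ^ 3 + b ^ 3) ^ ((1 : ℝ) / 3) + (b ^ 3 + c ^ 3) ^ ((1 : ℝ) / 3) +
        (c ^ 3 + a ^ 3) ^ ((1 : ℝ) / 3) >
      (2 + (2 : ℝ) ^ ((1 : ℝ) / 3)) * s -
        3 * Real.sqrt 3 * (2 - (2 : ℝ) ^ ((1 : ℝ) / 3)) * r := by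
  subst ha hb hc hs hr
  set x := Real.sqrt 10 with hxdef
  have hx0 : 0 ≤ x := Real.sqrt_nonneg 10
  have hxsq : x ^ 2 = 10 := Real.sq_sqrt (by norm_num)
  have hx1 : 3.162 ≤ x := by nlinarith
  have hx2 : x ≤ 3.1623 := by nlinarith
  set t := Real.sqrt 3 with htdef
  have ht0 : 0 ≤ t := Real.sqrt_nonneg 3
  have htsq : t ^ 2 = 3 := Real.sq_sqrt (by norm_num)
  have ht1 : 1.732 ≤ t := by nlinarith
  have ht2 : t ≤ 1.7321 := by nlinarith
  set u := (2 : ℝ) ^ ((1 : ℝ) / 3) with hudef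
  have hu1 : 1.2599 ≤ u := cbrt_lb _ _ (by norm_num) (by norm_num)
  have hu2 : u ≤ 1.26 := cbrt_ub _ _ (by norm_num) (by norm_num) (by norm_num)
  -- cube root lower bounds
  have hA : (3.036 : ℝ) ≤ ((3:ℝ) ^ 3 + 1 ^ 3) ^ ((1 : ℝ) / 3) :=
    cbrt_lb _ _ (by norm_num) (by norm_num)
  have hcx : x ^ 3 = 10 * x := by nlinarith
  have hB : (3.195 : ℝ) ≤ ((1:ℝ) ^ 3 + x ^ 3) ^ ((1 : ℝ) / 3) := by
    apply cbrt_lb _ _ (by norm_num)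
    rw [hcx]; nlinarith
  have hC : (3.884 : ℝ) ≤ (x ^ 3 + (3:ℝ) ^ 3) ^ ((1 : ℝ) / 3) := by
    apply cbrt_lb _ _ (by norm_num)
    rw [hcx]; nlinarith
  -- bounds on r
  have hden : (0:ℝ) < 4 + x := by linarith
  have hr2 : 3 / (4 + x) ≤ 0.41888 := by
    rw [div_le_iff₀ hden]; nlinarith
  have hr1 : 0.4188 ≤ 3 / (4 + x) := by
    rw [le_div_iff₀ hden]; nlinarith
  have hs2 : (4 + x) / 2 ≤ 3.58115 := by linarith
  have h1 : (2 + u) * ((4 + x) / 2) ≤ 3.26 * 3.58115 := by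
    apply mul_le_mul (by linarith) hs2 (by linarith) (by norm_num)
  have h2 : 3 * 1.732 * 0.74 * 0.4188 ≤ 3 * t * (2 - u) * (3 / (4 + x)) := by
    have hp : (0.74 : ℝ) * 0.4188 ≤ (2 - u) * (3 / (4 + x)) :=
      mul_le_mul (by linarith) hr1 (by norm_num) (by linarith)
    calc (3:ℝ) * 1.732 * 0.74 * 0.4188 ≤ 3 * t * (0.74 * 0.4188) := by
          linarith [mul_le_mul_of_nonneg_left ht1 (by norm_num : (0:ℝ) ≤ 3*(0.74*0.4188))]
      _ ≤ 3 * t * ((2 - u) * (3 / (4 + x))) :=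
          mul_le_mul_of_nonneg_left hp (by linarith)
      _ = 3 * t * (2 - u) * (3 / (4 + x)) := by ring
  linarith [hA, hB, hC, h1, h2]
end

section
/- For any natural number n ≥ 2 and any triangle with side lengths a, b, c and semiperimeter s, the inequality (aⁿ+bⁿ)^(1/n) + (bⁿ+cⁿ)^(1/n) + (cⁿ+aⁿ)^(1/n) < (2 + 2^(1/n))·s holds. -/
open Real Finset

lemma pow_sub_mono' (n : ℕ) {x y d : ℝ} (hy : 0 ≤ y) (hxy : y ≤ x) (hd : 0 ≤ d) :
    (y + d) ^ n - y ^ n ≤ (x + d) ^ n - x ^ n := by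
  have hx : 0 ≤ x := hy.trans hxy
  have h1 := geom_sum₂_mul (x + d) (y + d) n
  have h2 := geom_sum₂_mul x y n
  have hsum : (∑ i ∈ range n, x ^ i * y ^ (n - 1 - i)) ≤
      ∑ i ∈ range n, (x + d) ^ i * (y + d) ^ (n - 1 - i) := by
    apply Finset.sum_le_sum
    intro i _
    have e1 := pow_le_pow_left₀ hx (by linarith : x ≤ x + d) i
    have e2 := pow_le_pow_left₀ hy (by linarith : y ≤ y + d) (n - 1 - i)
    have hxi : 0 ≤ x ^ i := pow_nonneg hx i
    have hyi : 0 ≤ y ^ (n-1-i) := pow_nonneg hy _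
    nlinarith [pow_nonneg (by linarith : (0:ℝ) ≤ x + d) i]
  have hxy' : (0:ℝ) ≤ x - y := by linarith
  have h3 : (∑ i ∈ range n, x ^ i * y ^ (n - 1 - i)) * (x - y) ≤
      (∑ i ∈ range n, (x + d) ^ i * (y + d) ^ (n - 1 - i)) * ((x+d) - (y+d)) := by
    have e : (x+d) - (y+d) = x - y := by ring
    rw [e]
    exact mul_le_mul_of_nonneg_right hsum hxy'
  rw [h1, h2] at h3
  linarith

lemma key' (n : ℕ) (hn : 1 ≤ n) {x y : ℝ} (hy : 0 ≤ y) (hxy : y ≤ x) :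
    (x ^ n + y ^ n) ^ ((1:ℝ)/n) ≤ x + ((2:ℝ) ^ ((1:ℝ)/n) - 1) * y := by
  have hn0 : (n:ℝ) ≠ 0 := Nat.cast_ne_zero.mpr (by omega)
  set L : ℝ := (2:ℝ) ^ ((1:ℝ)/n) with hLdef
  have hL1 : (1:ℝ) ≤ L := Real.one_le_rpow one_le_two (by positivity)
  have hLn : L ^ n = 2 := by
    rw [hLdef, ← Real.rpow_natCast ((2:ℝ) ^ ((1:ℝ)/n)) n, ← Real.rpow_mul (by norm_num),
      one_div, inv_mul_cancel₀ hn0, Real.rpow_one]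
  have hd : 0 ≤ (L - 1) * y := mul_nonneg (by linarith) hy
  have hmono := pow_sub_mono' n hy hxy hd
  have h2 : (y + (L-1)*y) ^ n = 2 * y ^ n := by
    have e : y + (L-1)*y = L * y := by ring
    rw [e, mul_pow, hLn]
  have hsum : x ^ n + y ^ n ≤ (x + (L-1)*y) ^ n := by
    rw [h2] at hmono; linarith
  have hx : 0 ≤ x := hy.trans hxy
  have hxd : 0 ≤ x + (L-1)*y := by linarith
  have h4 := Real.rpow_le_rpow (by positivity) hsum (by positivity : (0:ℝ) ≤ 1/n)
  rwa [← Real.rpow_natCast (x + (L-1)*y) n, ← Real.rpow_mul hxd, mul_one_div,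
    div_self hn0, Real.rpow_one] at h4

lemma aux' (n : ℕ) (hn : 2 ≤ n) (x y z : ℝ) (hx : 0 < x) (hxy : x ≤ y) (hyz : y ≤ z)
    (htri : z < x + y) :
    (x ^ n + y ^ n) ^ ((1:ℝ)/n) + (y ^ n + z ^ n) ^ ((1:ℝ)/n) +
      (z ^ n + x ^ n) ^ ((1:ℝ)/n) < (2 + (2:ℝ) ^ ((1:ℝ)/n)) * ((x + y + z) / 2) := by
  have hn1 : 1 ≤ n := by omega
  set L : ℝ := (2:ℝ) ^ ((1:ℝ)/n) with hLdef
  have h1 : (x ^ n + y ^ n) ^ ((1:ℝ)/n) ≤ y + (L - 1) * x := by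
    rw [add_comm]; exact key' n hn1 hx.le hxy
  have h2 : (y ^ n + z ^ n) ^ ((1:ℝ)/n) ≤ z + (L - 1) * y := by
    rw [add_comm]; exact key' n hn1 (hx.le.trans hxy) hyz
  have h3 : (z ^ n + x ^ n) ^ ((1:ℝ)/n) ≤ z + (L - 1) * x :=
    key' n hn1 hx.le (hxy.trans hyz)
  have hL2 : L < 2 := by
    rw [hLdef]
    calc (2:ℝ) ^ ((1:ℝ)/n) < 2 ^ (1:ℝ) := by
          apply Real.rpow_lt_rpow_of_exponent_lt (by norm_num)
          rw [div_lt_one (by positivity)]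
          exact_mod_cast by omega
      _ = 2 := Real.rpow_one 2
  have hpos : 0 < (3*x + y - z) * (2 - L) := mul_pos (by linarith) (by linarith)
  nlinarith [h1, h2, h3, hpos]

lemma flip' (n : ℕ) (u v : ℝ) :
    (u ^ n + v ^ n) ^ ((1:ℝ)/n) = (v ^ n + u ^ n) ^ ((1:ℝ)/n) := by rw [add_comm]

theorem stmt_4 (n : ℕ) (hn : 2 ≤ n) (a b c s : ℝ) (ha : 0 < a) (hb : 0 < b) (hc : 0 < c)
    (hab : a + b > c) (hbc : b + c > a) (hca : c + a > b)
    (hs : s = (a + b + c) / 2) :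
    (a ^ n + b ^ n) ^ ((1 : ℝ) / n) + (b ^ n + c ^ n) ^ ((1 : ℝ) / n) +
        (c ^ n + a ^ n) ^ ((1 : ℝ) / n) <
      (2 + (2 : ℝ) ^ ((1 : ℝ) / n)) * s := by
  subst hs
  rcases le_total a b with h1 | h1 <;> rcases le_total b c with h2 | h2 <;>
    rcases le_total a c with h3 | h3
  · nlinarith [aux' n hn a b c ha h1 h2 (by linarith), flip' n a b, flip' n b c, flip' n c a]
  · nlinarith [aux' n hn a b c ha h1 h2 (by linarith), flip' n a b, flip' n b c, flip' n c a]
  · nlinarith [aux' n hn a c b ha h3 h2 (by linarith), flip' n a b, flip' n b c, flip' n c a]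
  · nlinarith [aux' n hn c a b hc h3 h1 (by linarith), flip' n a b, flip' n b c, flip' n c a]
  · nlinarith [aux' n hn b a c hb h1 h3 (by linarith), flip' n a b, flip' n b c, flip' n c a]
  · nlinarith [aux' n hn b c a hb h2 h3 (by linarith), flip' n a b, flip' n b c, flip' n c a]
  · nlinarith [aux' n hn a c b ha h3 h2 (by linarith), flip' n a b, flip' n b c, flip' n c a]
  · nlinarith [aux' n hn c b a hc h2 h1 (by linarith), flip' n a b, flip' n b c, flip' n c a]
end

section
/- Let a₁,…,a₆ be the edge lengths of a tetrahedron ABCD, labeled so that the four faces have edge triples (a₁,a₂,a₃), (a₃,a₄,a₅), (a₁,a₄,a₆), (a₂,a₅,a₆). Then the sum of √(aᵢ²+aⱼ²) over the 12 pairs (i,j) of edges sharing a face (each face contributing its three pairs) is at most (2+√2)·(a₁+a₂+a₃+a₄+a₅+a₆). -/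
/-- Sum over one triangular face of the square-root expression. -/
noncomputable def faceSum (x y z : ℝ) : ℝ :=
  Real.sqrt (x ^ 2 + y ^ 2) + Real.sqrt (y ^ 2 + z ^ 2) + Real.sqrt (z ^ 2 + x ^ 2)

private lemma sqrt2_sq : Real.sqrt 2 ^ 2 = 2 := Real.sq_sqrt (by norm_num)

private lemma sqrt2_ge : (1 : ℝ) ≤ Real.sqrt 2 := by
  nlinarith [sqrt2_sq, Real.sqrt_nonneg 2]

private lemma aux1 (x y : ℝ) (hy : 0 ≤ y) (hyx : y ≤ x) :
    Real.sqrt (x ^ 2 + y ^ 2) ≤ x + (Real.sqrt 2 - 1) * y := by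
  have hx : 0 ≤ x := le_trans hy hyx
  have h : x ^ 2 + y ^ 2 ≤ (x + (Real.sqrt 2 - 1) * y) ^ 2 := by
    nlinarith [sqrt2_sq, sqrt2_ge, mul_nonneg hy (sub_nonneg.2 hyx)]
  calc Real.sqrt (x ^ 2 + y ^ 2) ≤ Real.sqrt ((x + (Real.sqrt 2 - 1) * y) ^ 2) :=
        Real.sqrt_le_sqrt h
    _ = x + (Real.sqrt 2 - 1) * y := Real.sqrt_sq (by nlinarith [sqrt2_ge])

private lemma aux2 (x y : ℝ) (hx : 0 ≤ x) (hy : 0 ≤ y) :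
    Real.sqrt (x ^ 2 + y ^ 2) ≤ x + y := by
  have h : x ^ 2 + y ^ 2 ≤ (x + y) ^ 2 := by nlinarith
  calc Real.sqrt (x ^ 2 + y ^ 2) ≤ Real.sqrt ((x + y) ^ 2) := Real.sqrt_le_sqrt h
    _ = x + y := Real.sqrt_sq (by linarith)

/-- ordered version: z is the maximum -/
private lemma face_ord (x y z : ℝ) (hx : 0 ≤ x) (hy : 0 ≤ y)
    (hxz : x ≤ z) (hyz : y ≤ z) (htri : z ≤ x + y) :
    faceSum x y z ≤ (2 + Real.sqrt 2) / 2 * (x + y + z) := by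
  have h1 := aux2 x y hx hy
  have h2 : Real.sqrt (y ^ 2 + z ^ 2) ≤ z + (Real.sqrt 2 - 1) * y := by
    have := aux1 z y hy hyz
    rwa [add_comm (y ^ 2)] 
  have h3 : Real.sqrt (z ^ 2 + x ^ 2) ≤ z + (Real.sqrt 2 - 1) * x := aux1 z x hx hxz
  have hle : Real.sqrt 2 ≤ 2 := by nlinarith [sqrt2_sq, Real.sqrt_nonneg 2]
  have key : 0 ≤ (2 - Real.sqrt 2) * (x + y - z) :=
    mul_nonneg (by linarith) (by linarith)
  unfold faceSum
  nlinarith [sqrt2_ge]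

private lemma face_comm (x y z : ℝ) : faceSum x y z = faceSum y x z := by
  unfold faceSum
  rw [add_comm (x ^ 2) (y ^ 2), add_comm (y ^ 2) (z ^ 2), add_comm (z ^ 2) (x ^ 2)]
  ring

private lemma face_rot (x y z : ℝ) : faceSum x y z = faceSum y z x := by
  unfold faceSum; ring

private lemma face (x y z : ℝ) (hx : 0 < x) (hy : 0 < y) (hz : 0 < z)
    (t1 : x + y > z) (t2 : y + z > x) (t3 : z + x > y) :
    faceSum x y z ≤ (2 + Real.sqrt 2) / 2 * (x + y + z) := by
  rcases le_total x y with hxy | hxy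
  · rcases le_total y z with hyz | hyz
    · exact face_ord x y z hx.le hy.le (hxy.trans hyz) hyz t1.le
    · -- y is max
      have : faceSum x y z = faceSum z x y := by rw [face_rot, face_rot]
      rw [this]
      have h := face_ord z x y hz.le hx.le hyz hxy (by linarith)
      linarith [h]
  · rcases le_total x z with hxz | hxz
    · -- z max
      exact face_ord x y z hx.le hy.le hxz (hxy.trans hxz) t1.le
    · -- x max
      rw [face_rot]
      have h := face_ord y z x hy.le hz.le (hxy) (hxz) (by linarith)
      linarith [h]

theorem stmt_5 (a₁ a₂ a₃ a₄ a₅ a₆ : ℝ)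
    (h1 : 0 < a₁) (h2 : 0 < a₂) (h3 : 0 < a₃) (h4 : 0 < a₄) (h5 : 0 < a₅) (h6 : 0 < a₆)
    (f1a : a₁ + a₂ > a₃) (f1b : a₂ + a₃ > a₁) (f1c : a₃ + a₁ > a₂)
    (f2a : a₃ + a₄ > a₅) (f2b : a₄ + a₅ > a₃) (f2c : a₅ + a₃ > a₄)
    (f3a : a₁ + a₄ > a₆) (f3b : a₄ + a₆ > a₁) (f3c : a₆ + a₁ > a₄)
    (f4a : a₂ + a₅ > a₆) (f4b : a₅ + a₆ > a₂) (f4c : a₆ + a₂ > a₅) :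
    faceSum a₁ a₂ a₃ + faceSum a₃ a₄ a₅ + faceSum a₁ a₄ a₆ + faceSum a₂ a₅ a₆ ≤
      (2 + Real.sqrt 2) * (a₁ + a₂ + a₃ + a₄ + a₅ + a₆) := by
  have F1 := face a₁ a₂ a₃ h1 h2 h3 f1a f1b f1c
  have F2 := face a₃ a₄ a₅ h3 h4 h5 f2a f2b f2c
  have F3 := face a₁ a₄ a₆ h1 h4 h6 f3a f3b f3c
  have F4 := face a₂ a₅ a₆ h2 h5 h6 f4a f4b f4c
  linarith
end

section
/- For fixed a = 3, b = 1, c = √10, s = (4+√10)/2, r = 3/(4+√10), the sequence g(n) = (2+2^(1/n))·s − 3√3·(2−2^(1/n))·r − ∑_{cyc}(aⁿ+bⁿ)^(1/n) is strictly decreasing in n for n ≥ 2; consequently g(n) < 0 for all integers n ≥ 3. -/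
/-!
Write `g n = C + K * 2 ^ (1 / n) - ∑ ‖(x, y)‖ₙ` over the pairs `(3, 1)`, `(√10, 1)`, `(√10, 3)`,
where `K = s + 3 √3 r`. For `q = y / x ≤ 1`, comparing logarithms gives
`‖(x, y)‖ₙ - ‖(x, y)‖ₙ₊₁ ≤ 2 ^ (1 / n) * x * q ^ n * (1 + n (1 - q)) / (n (n + 1))`, and the weight
`q ^ n * (1 + n (1 - q))` is nonincreasing in `n`, whereas
`2 ^ (1 / n) - 2 ^ (1 / (n + 1)) ≥ 2 ^ (1 / (n + 1)) * log 2 / (n (n + 1))`.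
For `n ≥ 3` this reduces `g (n + 1) < g n` to the single numerical inequality
`2 ^ (1 / 12) * ∑ x q ^ 3 (1 + 3 (1 - q)) < K log 2`, i.e. `3.978 < 3.991`.
The step from `n = 2` and the negativity follow from `g 3 < 0 < g 2`.
-/

open Real

lemma le_rpow_one_div_of_pow_le {x b : ℝ} {n : ℕ} (hn : n ≠ 0) (hb : 0 ≤ b) (h : b ^ n ≤ x) :
    b ≤ x ^ ((1 : ℝ) / n) := by
  rw [one_div, le_rpow_inv_iff_of_pos hb ((pow_nonneg hb n).trans h) (by positivity),
    rpow_natCast]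
  exact h

lemma rpow_one_div_le_of_le_pow {x b : ℝ} {n : ℕ} (hn : n ≠ 0) (hx : 0 ≤ x) (hb : 0 ≤ b)
    (h : x ≤ b ^ n) : x ^ ((1 : ℝ) / n) ≤ b := by
  rw [one_div, rpow_inv_le_iff_of_pos hx hb (by positivity), rpow_natCast]
  exact h

lemma sub_le_mul_sub_log {a b : ℝ} (ha : 0 < a) (hb : 0 < b) :
    a - b ≤ a * (log a - log b) := by
  have h := log_le_sub_one_of_pos (div_pos hb ha)
  rw [log_div hb.ne' ha.ne'] at h
  have hab : a * (b / a - 1) = b - a := by field_simp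
  nlinarith [mul_le_mul_of_nonneg_left h ha.le]

lemma log_sub_log_le_sub {x y : ℝ} (hy : 1 ≤ y) (hxy : y ≤ x) : log x - log y ≤ x - y := by
  have h := log_le_sub_one_of_pos (div_pos (by linarith : 0 < x) (by linarith : 0 < y))
  rw [log_div (by linarith) (by linarith), div_sub_one (by linarith)] at h
  exact h.trans (div_le_self (by linarith) hy)

lemma rpow_mul_sub_mul_log_le_rpow_sub_rpow {c : ℝ} (hc : 0 < c) (s t : ℝ) :
    c ^ t * ((s - t) * log c) ≤ c ^ s - c ^ t := by
  have h : c ^ s = c ^ t * exp ((s - t) * log c) := by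
    rw [mul_comm (s - t), ← rpow_def_of_pos hc, ← rpow_add hc, add_sub_cancel]
  rw [h]
  nlinarith [rpow_pos_of_pos hc t, add_one_le_exp ((s - t) * log c)]

noncomputable def pairNorm (n : ℕ) (x y : ℝ) : ℝ := (x ^ n + y ^ n) ^ ((1 : ℝ) / n)

lemma pairNorm_comm (n : ℕ) (x y : ℝ) : pairNorm n x y = pairNorm n y x := by
  rw [pairNorm, pairNorm, add_comm]

lemma pairNorm_mul {x : ℝ} (hx : 0 ≤ x) {n : ℕ} (hn : n ≠ 0) {q : ℝ} (hq : 0 ≤ q) :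
    pairNorm n x (x * q) = x * pairNorm n 1 q := by
  rw [pairNorm, pairNorm, mul_pow, one_pow, ← mul_one_add,
    mul_rpow (by positivity) (by positivity), one_div, pow_rpow_inv_natCast hx hn]

lemma pairNorm_one_le {n : ℕ} {q : ℝ} (hq0 : 0 ≤ q) (hq1 : q ≤ 1) :
    pairNorm n 1 q ≤ 2 ^ ((1 : ℝ) / n) := by
  rw [pairNorm, one_pow]
  exact rpow_le_rpow (by positivity) (by linarith [pow_le_one₀ hq0 hq1 (n := n)]) (by positivity)

def tailWeight (q : ℝ) (n : ℕ) : ℝ := q ^ n * (1 + n * (1 - q))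

lemma tailWeight_nonneg {q : ℝ} (hq0 : 0 ≤ q) (hq1 : q ≤ 1) (n : ℕ) : 0 ≤ tailWeight q n := by
  have : 0 ≤ 1 - q := sub_nonneg.2 hq1
  unfold tailWeight
  positivity

lemma tailWeight_antitone {q : ℝ} (hq : 0 ≤ q) : Antitone (tailWeight q) := by
  refine antitone_nat_of_succ_le fun n => ?_
  have h : tailWeight q n - tailWeight q (n + 1) = q ^ n * ((n + 1) * (1 - q) ^ 2) := by
    unfold tailWeight; push_cast; ring
  have : 0 ≤ q ^ n * ((n + 1) * (1 - q) ^ 2) := by positivity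
  linarith

lemma pairNorm_one_sub_pairNorm_succ_le {q : ℝ} (hq0 : 0 ≤ q) (hq1 : q ≤ 1) {n : ℕ}
    (hn : n ≠ 0) :
    pairNorm n 1 q - pairNorm (n + 1) 1 q ≤
      2 ^ ((1 : ℝ) / n) * tailWeight q n / (n * (n + 1)) := by
  have hn' : (0 : ℝ) < n := by positivity
  have hpos : ∀ m : ℕ, 0 < pairNorm m 1 q := fun m => by rw [pairNorm]; positivity
  have hlog : ∀ m : ℕ, log (pairNorm m 1 q) = log (1 + q ^ m) / m := fun m => by
    rw [pairNorm, one_pow, log_rpow (by positivity)]; ring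
  have hlog_sub : log (pairNorm n 1 q) - log (pairNorm (n + 1) 1 q) ≤
      tailWeight q n / (n * (n + 1)) := by
    have e : log (pairNorm n 1 q) - log (pairNorm (n + 1) 1 q) =
        (log (1 + q ^ n) + n * (log (1 + q ^ n) - log (1 + q ^ (n + 1)))) / (n * (n + 1)) := by
      rw [hlog, hlog]; push_cast; field_simp; ring
    have hw : tailWeight q n = q ^ n + n * ((1 + q ^ n) - (1 + q ^ (n + 1))) := by
      rw [tailWeight, pow_succ]; ring
    have h1 : log (1 + q ^ n) ≤ q ^ n := by
      linarith [log_le_sub_one_of_pos (by positivity : 0 < 1 + q ^ n)]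
    have h2 : log (1 + q ^ n) - log (1 + q ^ (n + 1)) ≤ (1 + q ^ n) - (1 + q ^ (n + 1)) :=
      log_sub_log_le_sub (le_add_of_nonneg_right (by positivity))
        (by linarith [pow_le_pow_of_le_one hq0 hq1 (by omega : n ≤ n + 1)])
    rw [e, hw]
    gcongr
  calc pairNorm n 1 q - pairNorm (n + 1) 1 q
      ≤ pairNorm n 1 q * (log (pairNorm n 1 q) - log (pairNorm (n + 1) 1 q)) :=
        sub_le_mul_sub_log (hpos _) (hpos _)
    _ ≤ pairNorm n 1 q * (tailWeight q n / (n * (n + 1))) := by gcongr; exact (hpos _).le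
    _ ≤ 2 ^ ((1 : ℝ) / n) * (tailWeight q n / (n * (n + 1))) := by
        gcongr
        · exact div_nonneg (tailWeight_nonneg hq0 hq1 n) (by positivity)
        · exact pairNorm_one_le hq0 hq1
    _ = _ := by ring

lemma pairNorm_sub_pairNorm_succ_le {x y : ℝ} (hx : 0 < x) (hy : 0 ≤ y) (hyx : y ≤ x) {n : ℕ}
    (hn : n ≠ 0) :
    pairNorm n x y - pairNorm (n + 1) x y ≤
      2 ^ ((1 : ℝ) / n) * (x * tailWeight (y / x) n) / (n * (n + 1)) := by
  have hq0 : 0 ≤ y / x := div_nonneg hy hx.le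
  have hq1 : y / x ≤ 1 := (div_le_one hx).2 hyx
  have hy' : y = x * (y / x) := by field_simp
  rw [hy', pairNorm_mul hx.le hn hq0, pairNorm_mul hx.le n.succ_ne_zero hq0, ← hy', ← mul_sub]
  calc _ ≤ _ := mul_le_mul_of_nonneg_left (pairNorm_one_sub_pairNorm_succ_le hq0 hq1 hn) hx.le
    _ = _ := by ring

lemma sqrt_ten_bounds : 3.1622776 ≤ √10 ∧ √10 ≤ 3.1622777 := by
  constructor <;> nlinarith [sq_sqrt (by norm_num : (0 : ℝ) ≤ 10), sqrt_nonneg 10]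

lemma sqrt_three_bounds : 1.7320508 ≤ √3 ∧ √3 ≤ 1.7320509 := by
  constructor <;> nlinarith [sq_sqrt (by norm_num : (0 : ℝ) ≤ 3), sqrt_nonneg 3]

noncomputable def gap (n : ℕ) : ℝ :=
  (2 + (2 : ℝ) ^ ((1 : ℝ) / n)) * ((4 + √10) / 2) -
      3 * √3 * (2 - (2 : ℝ) ^ ((1 : ℝ) / n)) * (3 / (4 + √10)) -
    (pairNorm n 3 1 + pairNorm n 1 √10 + pairNorm n √10 3)

noncomputable def gapSlope : ℝ := (4 + √10) / 2 + 3 * √3 * (3 / (4 + √10))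

noncomputable def gapOffset : ℝ := 2 * ((4 + √10) / 2) - 2 * (3 * √3 * (3 / (4 + √10)))

lemma gap_eq (n : ℕ) :
    gap n = gapOffset + gapSlope * (2 : ℝ) ^ ((1 : ℝ) / n) -
      (pairNorm n 3 1 + pairNorm n √10 1 + pairNorm n √10 3) := by
  rw [gap, gapOffset, gapSlope, pairNorm_comm n 1]
  ring

lemma gapSlope_bounds : 5.7576 ≤ gapSlope ∧ gapSlope ≤ 5.75761 := by
  obtain ⟨h10, h10'⟩ := sqrt_ten_bounds
  obtain ⟨h3, h3'⟩ := sqrt_three_bounds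
  have hpos : 0 < 4 + √10 := by linarith
  have e : gapSlope = (4 + √10) / 2 + 9 * √3 / (4 + √10) := by rw [gapSlope]; ring
  rw [e]
  constructor
  · rw [← sub_le_iff_le_add', le_div_iff₀ hpos]; nlinarith
  · rw [← le_sub_iff_add_le', div_le_iff₀ hpos]; nlinarith

lemma gapOffset_bounds : 2.80934 ≤ gapOffset ∧ gapOffset ≤ 2.80935 := by
  obtain ⟨h10, h10'⟩ := sqrt_ten_bounds
  obtain ⟨h3, h3'⟩ := sqrt_three_bounds
  have hpos : 0 < 4 + √10 := by linarith
  have e : gapOffset = 4 + √10 - 18 * √3 / (4 + √10) := by rw [gapOffset]; ring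
  rw [e]
  constructor
  · rw [le_sub_iff_add_le', ← le_sub_iff_add_le, div_le_iff₀ hpos]; nlinarith
  · rw [sub_le_comm, le_div_iff₀ hpos]; nlinarith

lemma tailWeight_sum_three_le :
    3 * tailWeight (1 / 3) 3 + √10 * tailWeight (1 / √10) 3 + √10 * tailWeight (3 / √10) 3 ≤
      3.7542 := by
  obtain ⟨h10, -⟩ := sqrt_ten_bounds
  have hpos : 0 < √10 := by linarith
  have e : √10 * tailWeight (1 / √10) 3 + √10 * tailWeight (3 / √10) 3 = 11.2 - 2.46 * √10 := by
    unfold tailWeight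
    field_simp
    linear_combination (-(56 / 5) * √10 + (123 / 50) * (√10 ^ 2 + 10)) *
      sq_sqrt (by norm_num : (0 : ℝ) ≤ 10)
  have h3 : 3 * tailWeight (1 / 3) 3 = 1 / 3 := by norm_num [tailWeight]
  rw [add_assoc, e, h3]
  linarith

lemma pairNorm_losses_le {n : ℕ} (hn : 3 ≤ n) :
    (pairNorm n 3 1 - pairNorm (n + 1) 3 1) + (pairNorm n √10 1 - pairNorm (n + 1) √10 1) +
        (pairNorm n √10 3 - pairNorm (n + 1) √10 3) ≤
      (2 : ℝ) ^ ((1 : ℝ) / n) * 3.7542 / (n * (n + 1)) := by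
  have hn0 : n ≠ 0 := by omega
  obtain ⟨h10, -⟩ := sqrt_ten_bounds
  have h10pos : 0 < √10 := by linarith
  have hpairs := add_le_add (add_le_add
    (pairNorm_sub_pairNorm_succ_le (by norm_num : (0 : ℝ) < 3) zero_le_one (by norm_num) hn0)
    (pairNorm_sub_pairNorm_succ_le (y := 1) h10pos zero_le_one (by linarith) hn0))
    (pairNorm_sub_pairNorm_succ_le (y := 3) h10pos (by norm_num) (by linarith) hn0)
  have hweights : 3 * tailWeight (1 / 3) n + √10 * tailWeight (1 / √10) n +
      √10 * tailWeight (3 / √10) n ≤ 3.7542 := by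
    refine le_trans ?_ tailWeight_sum_three_le
    gcongr <;> exact tailWeight_antitone (by positivity) hn
  calc _ ≤ (2 : ℝ) ^ ((1 : ℝ) / n) * (3 * tailWeight (1 / 3) n + √10 * tailWeight (1 / √10) n +
        √10 * tailWeight (3 / √10) n) / (n * (n + 1)) := hpairs.trans_eq (by ring)
    _ ≤ _ := by gcongr

lemma two_rpow_one_div_le_mul_succ {n : ℕ} (hn : 3 ≤ n) :
    (2 : ℝ) ^ ((1 : ℝ) / n) ≤ 1.0595 * (2 : ℝ) ^ ((1 : ℝ) / (n + 1 : ℕ)) := by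
  have hsplit : (2 : ℝ) ^ ((1 : ℝ) / n) =
      (2 : ℝ) ^ ((1 : ℝ) / (n + 1 : ℕ)) * 2 ^ ((1 : ℝ) / (n * (n + 1))) := by
    rw [← rpow_add two_pos]
    push_cast
    field_simp
  have hexp : (1 : ℝ) / (n * (n + 1)) ≤ 1 / (12 : ℕ) := by
    have h3 : (3 : ℝ) ≤ n := by exact_mod_cast hn
    exact one_div_le_one_div_of_le (by norm_num) (by push_cast; nlinarith)
  have h12 : (2 : ℝ) ^ ((1 : ℝ) / (12 : ℕ)) ≤ 1.0595 :=
    rpow_one_div_le_of_le_pow (by norm_num) (by norm_num) (by norm_num) (by norm_num)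
  rw [hsplit, mul_comm]
  gcongr
  exact (rpow_le_rpow_of_exponent_le one_le_two hexp).trans h12

lemma mul_log_two_le_two_rpow_sub {n : ℕ} (hn : n ≠ 0) :
    (2 : ℝ) ^ ((1 : ℝ) / (n + 1 : ℕ)) * (log 2 / (n * (n + 1))) ≤
      (2 : ℝ) ^ ((1 : ℝ) / n) - (2 : ℝ) ^ ((1 : ℝ) / (n + 1 : ℕ)) := by
  convert rpow_mul_sub_mul_log_le_rpow_sub_rpow two_pos (1 / n) (1 / (n + 1 : ℕ)) using 3
  push_cast
  field_simp
  ring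

lemma gap_succ_lt_of_three_le {n : ℕ} (hn : 3 ≤ n) : gap (n + 1) < gap n := by
  set a := (2 : ℝ) ^ ((1 : ℝ) / n)
  set b := (2 : ℝ) ^ ((1 : ℝ) / (n + 1 : ℕ))
  have he : 0 < b / (n * (n + 1)) := by positivity
  have hK : 0 ≤ gapSlope := by linarith [gapSlope_bounds.1]
  have hloss : a * 3.7542 / (n * (n + 1)) ≤ 1.0595 * 3.7542 * (b / (n * (n + 1))) := by
    calc _ ≤ 1.0595 * b * 3.7542 / (n * (n + 1)) := by gcongr; exact two_rpow_one_div_le_mul_succ hn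
      _ = _ := by ring
  have hgain : 5.7576 * 0.6931471 * (b / (n * (n + 1))) ≤ gapSlope * (a - b) :=
    calc _ = 5.7576 * (0.6931471 * (b / (n * (n + 1)))) := by ring
      _ ≤ gapSlope * (log 2 * (b / (n * (n + 1)))) := by
          gcongr
          · exact gapSlope_bounds.1
          · linarith [log_two_gt_d9]
      _ = gapSlope * (b * (log 2 / (n * (n + 1)))) := by ring
      _ ≤ _ := mul_le_mul_of_nonneg_left (mul_log_two_le_two_rpow_sub (by omega)) hK
  rw [gap_eq, gap_eq]
  linarith [pairNorm_losses_le hn]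

lemma gap_two_pos : 0 < gap 2 := by
  have hsq := sq_sqrt (by norm_num : (0 : ℝ) ≤ 10)
  have hroot : 1.41421 ≤ (2 : ℝ) ^ ((1 : ℝ) / (2 : ℕ)) :=
    le_rpow_one_div_of_pow_le (by norm_num) (by norm_num) (by norm_num)
  have h1 : pairNorm 2 3 1 ≤ 3.16228 :=
    rpow_one_div_le_of_le_pow (by norm_num) (by positivity) (by norm_num) (by norm_num)
  have h2 : pairNorm 2 √10 1 ≤ 3.31663 :=
    rpow_one_div_le_of_le_pow (by norm_num) (by positivity) (by norm_num) (by rw [hsq]; norm_num)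
  have h3 : pairNorm 2 √10 3 ≤ 4.3589 :=
    rpow_one_div_le_of_le_pow (by norm_num) (by positivity) (by norm_num) (by rw [hsq]; norm_num)
  rw [gap_eq]
  nlinarith [gapSlope_bounds, gapOffset_bounds]

lemma gap_three_neg : gap 3 < 0 := by
  obtain ⟨h10, -⟩ := sqrt_ten_bounds
  have hcube : √10 ^ 3 = 10 * √10 := by
    rw [pow_succ, sq_sqrt (by norm_num : (0 : ℝ) ≤ 10)]
  have hroot : (2 : ℝ) ^ ((1 : ℝ) / (3 : ℕ)) ≤ 1.25993 :=
    rpow_one_div_le_of_le_pow (by norm_num) (by norm_num) (by norm_num) (by norm_num)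
  have h1 : 3.03658 ≤ pairNorm 3 3 1 :=
    le_rpow_one_div_of_pow_le (by norm_num) (by norm_num) (by norm_num)
  have h2 : 3.19526 ≤ pairNorm 3 √10 1 :=
    le_rpow_one_div_of_pow_le (by norm_num) (by norm_num) (by rw [hcube]; linarith)
  have h3 : 3.88468 ≤ pairNorm 3 √10 3 :=
    le_rpow_one_div_of_pow_le (by norm_num) (by norm_num) (by rw [hcube]; linarith)
  rw [gap_eq]
  nlinarith [gapSlope_bounds, gapOffset_bounds]

lemma gap_succ_lt {n : ℕ} (hn : 2 ≤ n) : gap (n + 1) < gap n := by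
  rcases hn.eq_or_lt with rfl | hn
  · exact gap_three_neg.trans gap_two_pos
  · exact gap_succ_lt_of_three_le hn

theorem stmt_14 (a b c s r : ℝ) (g : ℕ → ℝ)
    (ha : a = 3) (hb : b = 1) (hc : c = Real.sqrt 10)
    (hs : s = (4 + Real.sqrt 10) / 2) (hr : r = 3 / (4 + Real.sqrt 10))
    (hg : ∀ n : ℕ, g n =
      (2 + (2 : ℝ) ^ ((1 : ℝ) / n)) * s - 3 * Real.sqrt 3 * (2 - (2 : ℝ) ^ ((1 : ℝ) / n)) * r -
        ((a ^ n + b ^ n) ^ ((1 : ℝ) / n) + (b ^ n + c ^ n) ^ ((1 : ℝ) / n) +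
          (c ^ n + a ^ n) ^ ((1 : ℝ) / n))) :
    (∀ m n : ℕ, 2 ≤ m → m < n → g n < g m) ∧ ∀ n : ℕ, 3 ≤ n → g n < 0 := by
  subst ha hb hc hs hr
  obtain rfl : g = gap := funext fun n => (hg n).trans rfl
  have hanti : ∀ m n : ℕ, 2 ≤ m → m < n → gap n < gap m := fun m n hm hmn =>
    Nat.rel_of_forall_rel_succ_of_le_of_lt (· > ·) (fun _ => gap_succ_lt) hm hmn
  refine ⟨hanti, fun n hn => ?_⟩
  rcases hn.eq_or_lt with rfl | hn
  · exact gap_three_neg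
  · exact (hanti 3 n (by norm_num) hn).trans gap_three_neg
end
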